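/- arXiv:1003.5346 — 2 statements merged into one kernel-verified Lean document; each statement's English description precedes it below -/
import Mathlib

section
/- Let D ⊆ ℝ^n be an open convex downward set and f : D → D a convex monotone map with a t-stable fixed point. Then for every z ∈ D with f(z) ≤ z, the limit f^ω(z) = lim_{k→∞} f^k(z) exists, is a fixed point of f, and f^ω(z) agrees with z on the critical node set N^c(f). The resulting map f^ω from {z : f(z) ≤ z} onto the fixed point set is a monotone convex projection. -/
noncomputable section
open Filter Topology Set
open scoped Classical

/-- A square real matrix is *stable* if all of its orbits are bounded. -/
def MatStable {ι : Type*} [Fintype ι] [DecidableEq ι] (P : Matrix ι ι ℝ) : Prop :=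
  ∀ x : ι → ℝ, ∃ c : ℝ, ∀ k : ℕ, ‖(P ^ k).mulVec x‖ ≤ c

/-- Spectral radius of a real square matrix, via its complex spectrum. -/
def SpecRad {ι : Type*} [Fintype ι] (Q : Matrix ι ι ℝ) : ℝ :=
  haveI := Classical.decEq ι
  sSup {r : ℝ | ∃ μ : ℂ, μ ∈ spectrum ℂ (Q.map (fun a => (a : ℂ))) ∧ r = ‖μ‖}

/-- `i` has access to `j` in the digraph of the nonnegative matrix `P`. -/
def AccessM {n : ℕ} (P : Matrix (Fin n) (Fin n) ℝ) : Fin n → Fin n → Prop :=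
  Relation.ReflTransGen (fun i j => 0 < P i j)

/-- `C` is a class of `P` (an equivalence class of mutual access). -/
def IsClass {n : ℕ} (P : Matrix (Fin n) (Fin n) ℝ) (C : Set (Fin n)) : Prop :=
  ∃ i, C = {j | AccessM P i j ∧ AccessM P j i}

/-- Spectral radius of the principal submatrix `P_{CC}`. -/
def SpecRadOn {n : ℕ} (P : Matrix (Fin n) (Fin n) ℝ) (C : Set (Fin n)) : ℝ :=
  haveI : Fintype C := Fintype.ofFinite _
  SpecRad (Matrix.of fun i j : C => P i.1 j.1)

/-- A critical class of a stable nonnegative matrix. -/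
def IsCriticalClass {n : ℕ} (P : Matrix (Fin n) (Fin n) ℝ) (C : Set (Fin n)) : Prop :=
  IsClass P C ∧ SpecRadOn P C = 1

/-- The set of critical nodes of `P`. -/
def CriticalNodes {n : ℕ} (P : Matrix (Fin n) (Fin n) ℝ) : Set (Fin n) :=
  {i | ∃ C, IsCriticalClass P C ∧ i ∈ C}

/-- The subdifferential of `f` at `v` relative to the domain `D`. -/
def Subdiff {m n : ℕ} (f : (Fin m → ℝ) → (Fin n → ℝ)) (D : Set (Fin m → ℝ))
    (v : Fin m → ℝ) : Set (Matrix (Fin n) (Fin m) ℝ) :=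
  {M | ∀ x ∈ D, M.mulVec (x - v) ≤ f x - f v}

/-!
The orbit of `z` with `f z ≤ z` decreases. Writing `g` for the one-sided derivative of `f` at the
fixed point `v`, convexity gives `g (x - v) ≤ f x - v` and `-g (-y) ≤ g y`, so `v + g^[k] (z - v)`
bounds the orbit from below, uniformly in `k` by t-stability. The limit is a fixed point because
convex functions are continuous on open sets; monotonicity and convexity of the limit map pass
from the iterates.

For a critical node `i`, pick `P ∈ ∂f(v)` and put `s = z - v`, `c = s - P s ≥ z - f z ≥ 0`. The
partial sums `∑_{m<K} P^m c = s - P^K s` stay bounded at `i` because `P^K ≤ g^K`. On the critical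
class of `i`, `P` is irreducible with an eigenvalue of modulus one, hence has a nonnegative
subeigenvector, and this makes `∑_m (P^m c)_i` diverge unless `c_i = 0`. So `f z` agrees with `z`
at `i`, and then so do all iterates and their limit.
-/

open Matrix Function Finset Relation

namespace Matrix

variable {κ : Type*} [Fintype κ]

theorem monotone_mulVec_of_nonneg {μ : Type*} {B : Matrix μ κ ℝ} (hB : ∀ a b, 0 ≤ B a b) :
    Monotone B.mulVec := fun _ _ hxy a =>
  Finset.sum_le_sum fun k _ => mul_le_mul_of_nonneg_left (hxy k) (hB a k)

theorem mulVec_nonneg_of_nonneg {μ : Type*} {B : Matrix μ κ ℝ} (hB : ∀ a b, 0 ≤ B a b)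
    {y : κ → ℝ} (hy : 0 ≤ y) : 0 ≤ B *ᵥ y := by
  simpa using monotone_mulVec_of_nonneg hB hy

theorem mulVec_apply_pos_of_pos {μ : Type*} {B : Matrix μ κ ℝ} (hB : ∀ a b, 0 < B a b)
    {y : κ → ℝ} (hy : 0 ≤ y) {b : κ} (hb : 0 < y b) (a : μ) : 0 < (B *ᵥ y) a :=
  Finset.sum_pos' (fun k _ => mul_nonneg (hB a k).le (hy k))
    ⟨b, mem_univ b, mul_pos (hB a b) hb⟩

variable [DecidableEq κ] {A : Matrix κ κ ℝ}

theorem le_pow_mulVec_of_le_mulVec (hA : ∀ a b, 0 ≤ A a b) {x : κ → ℝ} (hx : x ≤ A *ᵥ x)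
    (m : ℕ) : x ≤ A ^ m *ᵥ x := by
  induction m with
  | zero => simp
  | succ m ih =>
    calc x ≤ A ^ m *ᵥ x := ih
      _ ≤ A ^ m *ᵥ (A *ᵥ x) := monotone_mulVec_of_nonneg (pow_apply_nonneg hA m) hx
      _ = A ^ (m + 1) *ᵥ x := by rw [mulVec_mulVec, pow_succ]

theorem iterate_mulVec (A : Matrix κ κ ℝ) (k : ℕ) (x : κ → ℝ) :
    A.mulVec^[k] x = A ^ k *ᵥ x := by
  induction k with
  | zero => simp
  | succ k ih => rw [iterate_succ_apply', ih, mulVec_mulVec, pow_succ']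

theorem pow_mulVec_le_iterate (hA : ∀ a b, 0 ≤ A a b) {g : (κ → ℝ) → κ → ℝ}
    (hAg : ∀ y, A *ᵥ y ≤ g y) (k : ℕ) (y : κ → ℝ) : A ^ k *ᵥ y ≤ g^[k] y := by
  rw [← iterate_mulVec]
  exact (monotone_mulVec_of_nonneg hA).iterate_le_of_le hAg k y

theorem exists_pow_apply_pos_of_reflTransGen (hA : ∀ a b, 0 ≤ A a b) {a b : κ}
    (h : ReflTransGen (fun a b => 0 < A a b) a b) : ∃ m, 0 < (A ^ m) a b := by
  induction h with
  | refl => exact ⟨0, by simp⟩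
  | tail _ hcd ih =>
    obtain ⟨m, hm⟩ := ih
    refine ⟨m + 1, ?_⟩
    rw [pow_succ, mul_apply]
    exact Finset.sum_pos' (fun k _ => mul_nonneg (pow_apply_nonneg hA m _ k) (hA k _))
      ⟨_, mem_univ _, mul_pos hm hcd⟩

theorem exists_sum_range_pow_pos (hA : ∀ a b, 0 ≤ A a b)
    (hirr : ∀ a b, ∃ m, 0 < (A ^ m) a b) :
    ∃ p, ∀ a b, 0 < (∑ q ∈ range p, A ^ q) a b := by
  choose m hm using hirr
  let M := univ.sup fun ab : κ × κ => m ab.1 ab.2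
  refine ⟨M + 1, fun a b => ?_⟩
  have hle : m a b ≤ M := le_sup (f := fun ab : κ × κ => m ab.1 ab.2) (mem_univ (a, b))
  rw [sum_apply]
  exact Finset.sum_pos' (fun q _ => pow_apply_nonneg hA q a b)
    ⟨m a b, mem_range.2 (Nat.lt_succ_of_le hle), hm a b⟩

/-- Irreducibility turns a nonzero subeigenvector `h` into `x = N h` with `N = ∑_{q<p} A^q`
entrywise positive; then `x ≤ t • N c` for some `t`, so `x i ≤ t (A^m N c)_i` for every `m`,
while `(A^m N c)_i = ∑_{q<p} (A^(m+q) c)_i` is summable in `m`. -/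
theorem not_summable_pow_mulVec_apply (hA : ∀ a b, 0 ≤ A a b)
    (hirr : ∀ a b, ∃ m, 0 < (A ^ m) a b) {h : κ → ℝ} (hh : 0 ≤ h) {b : κ} (hb : 0 < h b)
    (hsub : h ≤ A *ᵥ h) {c : κ → ℝ} (hc : 0 ≤ c) {i : κ} (hci : 0 < c i) :
    ¬ Summable fun m => (A ^ m *ᵥ c) i := by
  intro hsum
  obtain ⟨p, hN⟩ := exists_sum_range_pow_pos hA hirr
  set N := ∑ q ∈ range p, A ^ q
  have hNA : N * A = A * N :=
    ((Commute.sum_right _ _ _ fun q _ => Commute.self_pow A q).eq).symm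
  set x := N *ᵥ h
  have hx : ∀ a, 0 < x a := mulVec_apply_pos_of_pos hN hh hb
  have hxsub : x ≤ A *ᵥ x :=
    calc x ≤ N *ᵥ (A *ᵥ h) := monotone_mulVec_of_nonneg (fun a b => (hN a b).le) hsub
      _ = A *ᵥ x := by rw [mulVec_mulVec, hNA, ← mulVec_mulVec]
  set w := N *ᵥ c
  have hw : ∀ a, 0 < w a := mulVec_apply_pos_of_pos hN hc hci
  set t := ∑ a, x a / w a
  have hxw : x ≤ t • w := fun a => by
    calc x a = x a / w a * w a := (div_mul_cancel₀ _ (hw a).ne').symm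
      _ ≤ t * w a := mul_le_mul_of_nonneg_right
          (single_le_sum (fun j _ => (div_pos (hx j) (hw j)).le) (mem_univ a)) (hw a).le
  have hbound : ∀ m, x i ≤ t * (A ^ m *ᵥ w) i := fun m =>
    calc x i ≤ (A ^ m *ᵥ x) i := le_pow_mulVec_of_le_mulVec hA hxsub m i
      _ ≤ (A ^ m *ᵥ (t • w)) i := monotone_mulVec_of_nonneg (pow_apply_nonneg hA m) hxw i
      _ = t * (A ^ m *ᵥ w) i := by rw [mulVec_smul, Pi.smul_apply, smul_eq_mul]
  have hshift : ∀ m, (A ^ m *ᵥ w) i = ∑ q ∈ range p, (A ^ (m + q) *ᵥ c) i := fun m => by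
    rw [mulVec_mulVec, Finset.mul_sum, sum_mulVec, Finset.sum_apply]
    simp only [pow_add]
  have hsumw : Summable fun m => (A ^ m *ᵥ w) i := by
    simp only [hshift]
    exact summable_sum fun q _ => (summable_nat_add_iff q).2 hsum
  have hlim := hsumw.tendsto_atTop_zero.const_mul t
  rw [mul_zero] at hlim
  exact (hx i).not_ge (ge_of_tendsto' hlim hbound)

theorem exists_subeigenvector_of_mem_spectrum (hA : ∀ a b, 0 ≤ A a b) {μ : ℂ}
    (hμ : μ ∈ spectrum ℂ (A.map ((↑) : ℝ → ℂ))) (h1 : 1 ≤ ‖μ‖) :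
    ∃ h : κ → ℝ, 0 ≤ h ∧ (∃ b, 0 < h b) ∧ h ≤ A *ᵥ h := by
  rw [← spectrum_toLin', ← Module.End.hasEigenvalue_iff_mem_spectrum] at hμ
  obtain ⟨u, hu⟩ := hμ.exists_hasEigenvector
  have hAu : A.map ((↑) : ℝ → ℂ) *ᵥ u = μ • u := by simpa using hu.apply_eq_smul
  obtain ⟨b, hb⟩ := Function.ne_iff.1 hu.2
  refine ⟨fun a => ‖u a‖, fun a => norm_nonneg _, ⟨b, norm_pos_iff.2 hb⟩, fun a => ?_⟩
  calc ‖u a‖ ≤ ‖μ‖ * ‖u a‖ := le_mul_of_one_le_left (norm_nonneg _) h1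
    _ = ‖∑ k, (A a k : ℂ) * u k‖ := by
        rw [← norm_mul, ← smul_eq_mul, ← Pi.smul_apply, ← hAu]; rfl
    _ ≤ ∑ k, A a k * ‖u k‖ := by
        refine (norm_sum_le _ _).trans_eq (sum_congr rfl fun k _ => ?_)
        rw [norm_mul, Complex.norm_real, Real.norm_of_nonneg (hA a k)]

end Matrix

theorem exists_subeigenvector_of_specRad_eq_one {κ : Type*} [Fintype κ] {A : Matrix κ κ ℝ}
    (hA : ∀ a b, 0 ≤ A a b) (h1 : SpecRad A = 1) :
    ∃ h : κ → ℝ, 0 ≤ h ∧ (∃ b, 0 < h b) ∧ h ≤ A *ᵥ h := by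
  classical
  let S := {r : ℝ | ∃ μ : ℂ, μ ∈ spectrum ℂ (A.map ((↑) : ℝ → ℂ)) ∧ r = ‖μ‖}
  have hS : sSup S = 1 := h1
  have hne : S.Nonempty := by
    by_contra h
    rw [Set.not_nonempty_iff_eq_empty.1 h, Real.sSup_empty] at hS
    exact zero_ne_one hS
  have hfin : S.Finite := ((finite_spectrum _).image fun μ : ℂ => ‖μ‖).subset
    fun _ ⟨μ, hμ, hr⟩ => ⟨μ, hμ, hr.symm⟩
  obtain ⟨μ, hμ, hnorm⟩ : sSup S ∈ S := hne.csSup_mem hfin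
  exact exists_subeigenvector_of_mem_spectrum hA hμ (by rw [← hnorm, hS])

theorem IsClass.reflTransGen_subtype {n : ℕ} {P : Matrix (Fin n) (Fin n) ℝ} {C : Set (Fin n)}
    (hC : IsClass P C) {a b : Fin n} (ha : a ∈ C) (hb : b ∈ C) :
    ReflTransGen (fun x y : C => 0 < P x y) ⟨a, ha⟩ ⟨b, hb⟩ := by
  obtain ⟨i, rfl⟩ := hC
  -- every node on a path between two members of the class lies in the class
  have key : ∀ d, AccessM P a d → ∀ hd : d ∈ {j | AccessM P i j ∧ AccessM P j i},
      ReflTransGen (fun x y : {j | AccessM P i j ∧ AccessM P j i} => 0 < P x y)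
        ⟨a, ha⟩ ⟨d, hd⟩ := by
    intro d had
    induction had with
    | refl => exact fun _ => .refl
    | @tail c d hac hcd ih =>
      exact fun hd => (ih ⟨ha.1.trans hac, .head hcd hd.2⟩).tail hcd
  exact key b (ha.2.trans hb.1) hb

theorem sum_subtype_le_sum {ι : Type*} [Fintype ι] {s : Set ι} [Fintype s] {g : ι → ℝ}
    (hg : ∀ k, 0 ≤ g k) : ∑ k : s, g k ≤ ∑ k, g k := by
  rw [← Finset.sum_subtype s.toFinset (by simp) g]
  exact sum_le_univ_sum_of_nonneg hg

section Submatrix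

variable {ι : Type*} [Fintype ι] [DecidableEq ι] {P : Matrix ι ι ℝ} {s : Set ι} [Fintype s]

theorem pow_submatrix_apply_le (hP : ∀ a b, 0 ≤ P a b) (m : ℕ) (a b : s) :
    (P.submatrix (↑) (↑) ^ m) a b ≤ (P ^ m) a b := by
  induction m generalizing a b with
  | zero =>
    simp only [pow_zero, one_apply]
    split_ifs <;> simp_all
  | succ m ih =>
    rw [pow_succ, pow_succ, mul_apply, mul_apply]
    calc ∑ k : s, (P.submatrix (↑) (↑) ^ m) a k * P k b
        ≤ ∑ k : s, (P ^ m) a k * P k b :=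
          Finset.sum_le_sum fun k _ => mul_le_mul_of_nonneg_right (ih a k) (hP k b)
      _ ≤ ∑ k, (P ^ m) a k * P k b :=
          sum_subtype_le_sum fun k => mul_nonneg (pow_apply_nonneg hP m a k) (hP k b)

theorem pow_submatrix_mulVec_apply_le (hP : ∀ a b, 0 ≤ P a b) {c : ι → ℝ} (hc : 0 ≤ c)
    (m : ℕ) (a : s) : (P.submatrix (↑) (↑) ^ m *ᵥ fun k : s => c k) a ≤ (P ^ m *ᵥ c) a :=
  calc ∑ k : s, (P.submatrix (↑) (↑) ^ m) a k * c k
      ≤ ∑ k : s, (P ^ m) a k * c k :=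
        Finset.sum_le_sum fun k _ =>
          mul_le_mul_of_nonneg_right (pow_submatrix_apply_le hP m a k) (hc k)
    _ ≤ ∑ k, (P ^ m) a k * c k :=
        sum_subtype_le_sum fun k => mul_nonneg (pow_apply_nonneg hP m a k) (hc k)

end Submatrix

theorem eq_zero_of_mem_criticalNodes {n : ℕ} {P : Matrix (Fin n) (Fin n) ℝ}
    (hP : ∀ a b, 0 ≤ P a b) {i : Fin n} (hi : i ∈ CriticalNodes P) {c : Fin n → ℝ}
    (hc : 0 ≤ c) (hsum : Summable fun m => (P ^ m *ᵥ c) i) : c i = 0 := by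
  obtain ⟨C, ⟨hC, hrad⟩, hiC⟩ := hi
  -- the instance that `SpecRadOn` uses
  let : Fintype C := Fintype.ofFinite _
  let A : Matrix C C ℝ := P.submatrix (↑) (↑)
  have hA : ∀ a b, 0 ≤ A a b := fun a b => hP a b
  have hirr : ∀ a b : C, ∃ m, 0 < (A ^ m) a b := fun a b =>
    exists_pow_apply_pos_of_reflTransGen hA (hC.reflTransGen_subtype a.2 b.2)
  obtain ⟨h, hh, ⟨b, hb⟩, hsub⟩ := exists_subeigenvector_of_specRad_eq_one hA hrad
  refine le_antisymm (not_lt.1 fun hci => not_summable_pow_mulVec_apply hA hirr hh hb hsub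
    (c := fun k : C => c k) (i := ⟨i, hiC⟩) (fun k => hc k) hci ?_) (hc i)
  exact .of_nonneg_of_le (fun m => mulVec_nonneg_of_nonneg (pow_apply_nonneg hA m)
    (fun k => hc k) _) (fun m => pow_submatrix_mulVec_apply_le hP hc m _) hsum

theorem eventually_add_smul_mem {E : Type*} [AddCommGroup E] [Module ℝ E] [TopologicalSpace E]
    [ContinuousAdd E] [ContinuousSMul ℝ E] {D : Set E} (hD : IsOpen D) {v : E} (hv : v ∈ D)
    (y : E) : ∀ᶠ ε in 𝓝[>] (0 : ℝ), v + ε • y ∈ D := by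
  have hcont : Tendsto (fun ε : ℝ => v + ε • y) (𝓝 0) (𝓝 v) :=
    (by fun_prop : Continuous fun ε : ℝ => v + ε • y).tendsto' 0 v (by simp)
  exact nhdsWithin_le_nhds (hcont.eventually_mem (hD.mem_nhds hv))

def HasRightDirDerivAt {ι : Type*} (f g : (ι → ℝ) → ι → ℝ) (v : ι → ℝ) : Prop :=
  ∀ y, Tendsto (fun ε : ℝ => ε⁻¹ • (f (v + ε • y) - f v)) (𝓝[>] 0) (𝓝 (g y))

namespace HasRightDirDerivAt

variable {ι : Type*} {D : Set (ι → ℝ)} {f g : (ι → ℝ) → ι → ℝ} {v : ι → ℝ}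

theorem monotone (hg : HasRightDirDerivAt f g v) (hD : IsOpen D) (hv : v ∈ D)
    (hf : MonotoneOn f D) : Monotone g := by
  intro y y' hy i
  refine le_of_tendsto_of_tendsto (tendsto_pi_nhds.1 (hg y) i) (tendsto_pi_nhds.1 (hg y') i) ?_
  filter_upwards [eventually_add_smul_mem hD hv y, eventually_add_smul_mem hD hv y',
    self_mem_nhdsWithin] with ε hε hε' (hε0 : 0 < ε)
  have hfle := hf hε hε' (add_le_add_right (smul_le_smul_of_nonneg_left hy hε0.le) v) i
  simp only [Pi.smul_apply, Pi.sub_apply, smul_eq_mul]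
  gcongr

theorem neg_neg_le (hg : HasRightDirDerivAt f g v) (hD : IsOpen D) (hv : v ∈ D)
    (hf : ∀ i, ConvexOn ℝ D fun x => f x i) (y : ι → ℝ) : -g (-y) ≤ g y := by
  intro i
  suffices 0 ≤ g y i + g (-y) i by simp only [Pi.neg_apply]; linarith
  refine ge_of_tendsto (tendsto_pi_nhds.1 ((hg y).add (hg (-y))) i) ?_
  filter_upwards [eventually_add_smul_mem hD hv y, eventually_add_smul_mem hD hv (-y),
    self_mem_nhdsWithin] with ε h₁ h₂ (hε0 : 0 < ε)
  have hmid := (hf i).2 h₁ h₂ (by norm_num : (0 : ℝ) ≤ 1 / 2) (by norm_num : (0 : ℝ) ≤ 1 / 2)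
    (by norm_num)
  rw [show (1 / 2 : ℝ) • (v + ε • y) + (1 / 2 : ℝ) • (v + ε • -y) = v by module] at hmid
  simp only [Pi.add_apply, Pi.smul_apply, Pi.sub_apply, smul_eq_mul] at hmid ⊢
  rw [← mul_add]
  exact mul_nonneg (inv_nonneg.2 hε0.le) (by linarith)

theorem le_sub (hg : HasRightDirDerivAt f g v) (hv : v ∈ D)
    (hf : ∀ i, ConvexOn ℝ D fun x => f x i) {y : ι → ℝ} (hy : v + y ∈ D) :
    g y ≤ f (v + y) - f v := by
  intro i
  refine le_of_tendsto (tendsto_pi_nhds.1 (hg y) i) ?_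
  filter_upwards [Ioo_mem_nhdsGT one_pos] with ε ⟨hε0, hε1⟩
  have hcv := (hf i).2 hv hy (sub_nonneg.2 hε1.le) hε0.le (sub_add_cancel 1 ε)
  rw [show (1 - ε) • v + ε • (v + y) = v + ε • y by module] at hcv
  simp only [Pi.smul_apply, Pi.sub_apply, smul_eq_mul] at hcv ⊢
  rw [inv_mul_le_iff₀ hε0]
  linarith

theorem mulVec_le {n : ℕ} {D : Set (Fin n → ℝ)} {f g : (Fin n → ℝ) → Fin n → ℝ}
    {v : Fin n → ℝ} (hg : HasRightDirDerivAt f g v) (hD : IsOpen D) (hv : v ∈ D)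
    {P : Matrix (Fin n) (Fin n) ℝ} (hP : P ∈ Subdiff f D v) (y : Fin n → ℝ) : P *ᵥ y ≤ g y := by
  intro i
  refine ge_of_tendsto (tendsto_pi_nhds.1 (hg y) i) ?_
  filter_upwards [eventually_add_smul_mem hD hv y, self_mem_nhdsWithin] with ε hε (hε0 : 0 < ε)
  have hsub := hP _ hε i
  rw [add_sub_cancel_left, mulVec_smul] at hsub
  simp only [Pi.smul_apply, Pi.sub_apply, smul_eq_mul] at hsub ⊢
  rwa [le_inv_mul_iff₀ hε0]

end HasRightDirDerivAt

theorem nonneg_of_mem_subdiff {n : ℕ} {D : Set (Fin n → ℝ)} (hD : IsLowerSet D)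
    {f : (Fin n → ℝ) → Fin n → ℝ} (hf : MonotoneOn f D) {v : Fin n → ℝ} (hv : v ∈ D)
    {P : Matrix (Fin n) (Fin n) ℝ} (hP : P ∈ Subdiff f D v) (a b : Fin n) : 0 ≤ P a b := by
  have hle : v - Pi.single b 1 ≤ v := sub_le_self _ (Pi.single_nonneg.2 zero_le_one)
  have hmem : v - Pi.single b 1 ∈ D := hD hle hv
  have hsub := (hP _ hmem a).trans (sub_nonpos.2 (hf hmem hv hle a))
  rw [sub_sub_cancel_left, mulVec_neg, mulVec_single_one] at hsub
  simpa using hsub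

section Orbits

variable {α : Type*} {D : Set α} {f : α → α}

theorem MonotoneOn.iterate_le_iterate [Preorder α] (hf : MonotoneOn f D) (hfD : MapsTo f D D)
    {x y : α} (hx : x ∈ D) (hy : y ∈ D) (hxy : x ≤ y) (k : ℕ) : f^[k] x ≤ f^[k] y := by
  induction k with
  | zero => exact hxy
  | succ k ih =>
    rw [iterate_succ_apply', iterate_succ_apply']
    exact hf (hfD.iterate k hx) (hfD.iterate k hy) ih

theorem MonotoneOn.antitone_iterate_of_map_le [Preorder α] (hf : MonotoneOn f D)
    (hfD : MapsTo f D D) {z : α} (hz : z ∈ D) (hfz : f z ≤ z) : Antitone fun k => f^[k] z :=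
  antitone_nat_of_succ_le fun k => by
    rw [iterate_succ_apply]
    exact hf.iterate_le_iterate hfD (hfD hz) hz hfz k

variable {g : α → α}

theorem neg_iterate_neg_le_iterate [InvolutiveNeg α] [Preorder α] (hg : Monotone g)
    (hneg : ∀ y, -g (-y) ≤ g y) (k : ℕ) (y : α) : -g^[k] (-y) ≤ g^[k] y := by
  induction k with
  | zero => simp
  | succ k ih =>
    rw [iterate_succ_apply', iterate_succ_apply']
    calc -g (g^[k] (-y)) = -g (-(-g^[k] (-y))) := by rw [neg_neg]
      _ ≤ g (-g^[k] (-y)) := hneg _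
      _ ≤ g (g^[k] y) := hg ih

theorem iterate_sub_le_iterate_sub [Sub α] [Preorder α] (hfD : MapsTo f D D) (hg : Monotone g)
    {v : α} (hgf : ∀ x ∈ D, g (x - v) ≤ f x - v) {z : α} (hz : z ∈ D) (k : ℕ) :
    g^[k] (z - v) ≤ f^[k] z - v := by
  induction k with
  | zero => rfl
  | succ k ih =>
    rw [iterate_succ_apply', iterate_succ_apply']
    exact (hg ih).trans (hgf _ (hfD.iterate k hz))

theorem bddBelow_range_iterate [AddCommGroup α] [PartialOrder α] [IsOrderedAddMonoid α]
    (hfD : MapsTo f D D) (hg : Monotone g) {v : α}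
    (hgf : ∀ x ∈ D, g (x - v) ≤ f x - v) (hneg : ∀ y, -g (-y) ≤ g y)
    (hbdd : ∀ x, ∃ u, ∀ k, g^[k] x ≤ u) {z : α} (hz : z ∈ D) :
    BddBelow (range fun k => f^[k] z) := by
  obtain ⟨u, hu⟩ := hbdd (-(z - v))
  refine ⟨v - u, ?_⟩
  rintro _ ⟨k, rfl⟩
  have h₁ := neg_iterate_neg_le_iterate hg hneg k (z - v)
  have h₂ := iterate_sub_le_iterate_sub hfD hg hgf hz k
  calc v - u ≤ v - g^[k] (-(z - v)) := sub_le_sub_left (hu k) v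
    _ ≤ v + g^[k] (z - v) := by rw [sub_eq_add_neg]; exact add_le_add_right h₁ v
    _ ≤ f^[k] z := le_sub_iff_add_le'.1 h₂

end Orbits

section Convexity

variable {ι : Type*} {D : Set (ι → ℝ)} {f : (ι → ℝ) → ι → ℝ} {x y : ι → ℝ} {t : ℝ}

theorem map_convexCombination_le (hf : ∀ i, ConvexOn ℝ D fun x => f x i) (hx : x ∈ D)
    (hy : y ∈ D) (ht₀ : 0 ≤ t) (ht₁ : t ≤ 1) :
    f (t • x + (1 - t) • y) ≤ t • f x + (1 - t) • f y :=
  fun i => (hf i).2 hx hy ht₀ (sub_nonneg.2 ht₁) (add_sub_cancel t 1)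

theorem map_convexCombination_le_self (hf : ∀ i, ConvexOn ℝ D fun x => f x i) (hx : x ∈ D)
    (hy : y ∈ D) (hfx : f x ≤ x) (hfy : f y ≤ y) (ht₀ : 0 ≤ t) (ht₁ : t ≤ 1) :
    f (t • x + (1 - t) • y) ≤ t • x + (1 - t) • y :=
  (map_convexCombination_le hf hx hy ht₀ ht₁).trans (add_le_add
    (smul_le_smul_of_nonneg_left hfx ht₀) (smul_le_smul_of_nonneg_left hfy (sub_nonneg.2 ht₁)))

theorem iterate_convexCombination_le (hD : Convex ℝ D) (hf : ∀ i, ConvexOn ℝ D fun x => f x i)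
    (hmono : MonotoneOn f D) (hfD : MapsTo f D D) (hx : x ∈ D) (hy : y ∈ D) (ht₀ : 0 ≤ t)
    (ht₁ : t ≤ 1) (k : ℕ) : f^[k] (t • x + (1 - t) • y) ≤ t • f^[k] x + (1 - t) • f^[k] y := by
  induction k with
  | zero => rfl
  | succ k ih =>
    have hxk := hfD.iterate k hx
    have hyk := hfD.iterate k hy
    rw [iterate_succ_apply', iterate_succ_apply', iterate_succ_apply']
    exact (hmono (hfD.iterate k (hD hx hy ht₀ (sub_nonneg.2 ht₁) (add_sub_cancel t 1)))
      (hD hxk hyk ht₀ (sub_nonneg.2 ht₁) (add_sub_cancel t 1)) ih).trans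
      (map_convexCombination_le hf hxk hyk ht₀ ht₁)

theorem isFixedPt_of_tendsto_iterate_of_map_le [Fintype ι] (hD : IsOpen D) (hDl : IsLowerSet D)
    (hf : ∀ i, ConvexOn ℝ D fun x => f x i) (hmono : MonotoneOn f D) (hfD : MapsTo f D D)
    {z : ι → ℝ} (hz : z ∈ D) (hfz : f z ≤ z) (hy : Tendsto (fun k => f^[k] z) atTop (𝓝 y)) :
    IsFixedPt f y := by
  have hyz : y ≤ z :=
    le_of_tendsto' hy fun k => hmono.antitone_iterate_of_map_le hfD hz hfz k.zero_le
  have hcont : ContinuousOn f D := continuousOn_pi.2 fun i => (hf i).continuousOn hD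
  exact isFixedPt_of_tendsto_iterate hy (hcont.continuousAt (hD.mem_nhds (hDl hyz hz)))

end Convexity

section CriticalNodes

variable {n : ℕ} {D : Set (Fin n → ℝ)} {f g : (Fin n → ℝ) → Fin n → ℝ} {v z : Fin n → ℝ}
  {P : Matrix (Fin n) (Fin n) ℝ} {i : Fin n}

theorem apply_eq_of_mem_criticalNodes (hD : IsOpen D) (hDl : IsLowerSet D)
    (hf : MonotoneOn f D) (hv : v ∈ D) (hfv : f v = v) (hg : HasRightDirDerivAt f g v)
    (hbdd : ∀ x, ∃ u, ∀ k, g^[k] x ≤ u) (hP : P ∈ Subdiff f D v) (hi : i ∈ CriticalNodes P)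
    (hz : z ∈ D) (hfz : f z ≤ z) : f z i = z i := by
  have hPnn := nonneg_of_mem_subdiff hDl hf hv hP
  set s := z - v
  have hPs : P *ᵥ s ≤ f z - v := by simpa [hfv] using hP z hz
  set c := (1 - P) *ᵥ s
  have hc : z - f z ≤ c := fun j => by
    have := hPs j
    simp only [c, sub_mulVec, one_mulVec, Pi.sub_apply, s] at this ⊢
    linarith
  have hc0 : 0 ≤ c := (sub_nonneg.2 hfz).trans hc
  have htel : ∀ K, ∑ m ∈ range K, P ^ m *ᵥ c = s - P ^ K *ᵥ s := fun K => by
    simp_rw [c, mulVec_mulVec]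
    rw [← sum_mulVec, ← Finset.sum_mul, geom_sum_mul_neg, sub_mulVec, one_mulVec]
  obtain ⟨u, hu⟩ := hbdd (-s)
  have hsum : Summable fun m => (P ^ m *ᵥ c) i := by
    refine summable_of_sum_range_le (c := s i + u i)
      (fun m => mulVec_nonneg_of_nonneg (pow_apply_nonneg hPnn m) hc0 i) fun K => ?_
    have hK := (pow_mulVec_le_iterate hPnn (hg.mulVec_le hD hv hP) K (-s)).trans (hu K) i
    rw [mulVec_neg, Pi.neg_apply] at hK
    rw [← Finset.sum_apply, htel, Pi.sub_apply]
    linarith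
  have hci := eq_zero_of_mem_criticalNodes hPnn hi hc0 hsum
  have hzi := hc i
  simp only [Pi.sub_apply] at hzi
  linarith [hfz i]

theorem iterate_apply_eq_of_mem_criticalNodes (hD : IsOpen D) (hDl : IsLowerSet D)
    (hf : MonotoneOn f D) (hfD : MapsTo f D D) (hv : v ∈ D) (hfv : f v = v)
    (hg : HasRightDirDerivAt f g v) (hbdd : ∀ x, ∃ u, ∀ k, g^[k] x ≤ u)
    (hP : P ∈ Subdiff f D v) (hi : i ∈ CriticalNodes P) (hz : z ∈ D) (hfz : f z ≤ z) (k : ℕ) :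
    f^[k] z i = z i := by
  induction k with
  | zero => rfl
  | succ k ih =>
    have hstep : f (f^[k] z) ≤ f^[k] z := by
      simpa only [iterate_succ_apply'] using hf.antitone_iterate_of_map_le hfD hz hfz k.le_succ
    rw [iterate_succ_apply', apply_eq_of_mem_criticalNodes hD hDl hf hv hfv hg hbdd hP hi
      (hfD.iterate k hz) hstep, ih]

end CriticalNodes

/-- on an open convex downward domain, a convex monotone map with a
t-stable fixed point admits a limit projection f^ω on the set of points z with
f(z) ≤ z: the orbit of z converges to a fixed point agreeing with z on the critical
nodes, and the resulting map is a monotone convex projection onto the fixed-point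
set. -/
theorem stmt17 {n : ℕ} (D : Set (Fin n → ℝ)) (hDo : IsOpen D) (hDc : Convex ℝ D)
    (hDdown : ∀ x ∈ D, ∀ y : Fin n → ℝ, y ≤ x → y ∈ D)
    (f : (Fin n → ℝ) → (Fin n → ℝ)) (hmaps : Set.MapsTo f D D)
    (hconv : ∀ i, ConvexOn ℝ D (fun x => f x i))
    (hmono : ∀ x ∈ D, ∀ y ∈ D, x ≤ y → f x ≤ f y)
    (v : Fin n → ℝ) (hv : v ∈ D) (hfv : f v = v)
    (gv : (Fin n → ℝ) → (Fin n → ℝ))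
    (hgv : ∀ y : Fin n → ℝ,
      Tendsto (fun ε : ℝ => ε⁻¹ • (f (v + ε • y) - f v)) (𝓝[>] (0:ℝ)) (𝓝 (gv y)))
    (hbv : ∀ x : Fin n → ℝ, ∃ u : Fin n → ℝ, ∀ k : ℕ, gv^[k] x ≤ u) :
    let Nc : Set (Fin n) := {i | ∃ P ∈ Subdiff f D v, i ∈ CriticalNodes P}
    ∃ fω : (Fin n → ℝ) → (Fin n → ℝ),
      (∀ z ∈ D, f z ≤ z →
        Tendsto (fun k : ℕ => f^[k] z) atTop (𝓝 (fω z)) ∧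
        f (fω z) = fω z ∧
        (∀ i ∈ Nc, fω z i = z i) ∧
        fω (fω z) = fω z) ∧
      (∀ z ∈ D, f z ≤ z → ∀ z' ∈ D, f z' ≤ z' → z ≤ z' → fω z ≤ fω z') ∧
      (∀ z ∈ D, f z ≤ z → ∀ z' ∈ D, f z' ≤ z' → ∀ t : ℝ, 0 ≤ t → t ≤ 1 →
        fω (t • z + (1 - t) • z') ≤ t • fω z + (1 - t) • fω z') ∧
      (∀ u ∈ D, f u = u → fω u = u) := by
  intro Nc
  have hDl : IsLowerSet D := fun x y hyx hx => hDdown x hx y hyx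
  have hg : HasRightDirDerivAt f gv v := hgv
  have hgf : ∀ x ∈ D, gv (x - v) ≤ f x - v := fun x hx => by
    simpa [hfv] using hg.le_sub hv hconv (y := x - v) (by simpa using hx)
  have hlim : ∀ z ∈ D, f z ≤ z → Tendsto (fun k => f^[k] z) atTop (𝓝 (⨅ k, f^[k] z)) :=
    fun z hz hfz => tendsto_atTop_ciInf (MonotoneOn.antitone_iterate_of_map_le hmono hmaps hz hfz)
      (bddBelow_range_iterate hmaps (hg.monotone hDo hv hmono) hgf
        (hg.neg_neg_le hDo hv hconv) hbv hz)
  have hfix : ∀ z ∈ D, f z ≤ z → f (⨅ k, f^[k] z) = ⨅ k, f^[k] z := fun z hz hfz =>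
    isFixedPt_of_tendsto_iterate_of_map_le hDo hDl hconv hmono hmaps hz hfz (hlim z hz hfz)
  have hproj : ∀ u, f u = u → ⨅ k, f^[k] u = u := fun u hu => by simp [iterate_fixed hu]
  refine ⟨fun z => ⨅ k, f^[k] z, fun z hz hfz => ⟨hlim z hz hfz, hfix z hz hfz, ?_,
    hproj _ (hfix z hz hfz)⟩, ?_, ?_, fun u _ => hproj u⟩
  · rintro i ⟨P, hP, hi⟩
    have hconst := iterate_apply_eq_of_mem_criticalNodes hDo hDl hmono hmaps hv hfv hg hbv hP hi
      hz hfz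
    refine tendsto_nhds_unique (tendsto_pi_nhds.1 (hlim z hz hfz) i) ?_
    simp only [hconst, tendsto_const_nhds]
  · intro z hz hfz z' hz' hfz' hle
    exact le_of_tendsto_of_tendsto' (hlim z hz hfz) (hlim z' hz' hfz')
      (MonotoneOn.iterate_le_iterate hmono hmaps hz hz' hle)
  · intro z hz hfz z' hz' hfz' t ht₀ ht₁
    have hw := hDc hz hz' ht₀ (sub_nonneg.2 ht₁) (add_sub_cancel t 1)
    exact le_of_tendsto_of_tendsto'
      (hlim _ hw (map_convexCombination_le_self hconv hz hz' hfz hfz' ht₀ ht₁))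
      (((hlim z hz hfz).const_smul t).add ((hlim z' hz' hfz').const_smul (1 - t)))
      (iterate_convexCombination_le hDc hconv hmono hmaps hz hz' ht₀ ht₁)
end
end

section
/- Let f : D → D be a convex monotone map (D ⊆ ℝ^n open convex) and let v, w be fixed points of f with w ≤ v. If w ≪ v (strict inequality in every coordinate) or v is Lyapunov stable, then w is Lyapunov stable. -/
noncomputable section
open Filter Topology Set
open scoped Classical

/-- Lyapunov stability of a fixed point of a self-map of D. -/
def LyapStable {n : ℕ} (f : (Fin n → ℝ) → (Fin n → ℝ)) (D : Set (Fin n → ℝ))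
    (v : Fin n → ℝ) : Prop :=
  ∀ U ∈ 𝓝 v, ∃ V ∈ 𝓝 v, V ⊆ D ∧ ∀ x ∈ V, ∀ k : ℕ, 1 ≤ k → f^[k] x ∈ U

/-!
A uniform upper bound `c` on the orbits of a neighbourhood of a fixed point `w` forces stability:
the iterates `f^[k]` are convex and monotone, so `f^[k] (w + t • d) ≤ w + t • (c - w)`, and
convexity at the midpoint `w` of `w ± t • d` turns this into the matching lower bound. Such a
bound exists near `w`: if `w ≪ v`, points below `v` have orbits below `v`; if `v` is stable,
shifting a neighbourhood of `v` by `w - v ≤ 0` and using monotonicity carries its bound to `w`.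
-/

open Function

section Convexity

variable {𝕜 E F β : Type*} [Semiring 𝕜] [PartialOrder 𝕜] [AddCommMonoid E] [AddCommMonoid F]
  [AddCommMonoid β] [PartialOrder β] [SMul 𝕜 E] [SMul 𝕜 F] [SMul 𝕜 β] {s : Set E}

theorem ConvexOn.comp_of_mapsTo [PartialOrder F] {t : Set F} {f : E → F} {g : F → β}
    (hg : ConvexOn 𝕜 t g) (hf : ConvexOn 𝕜 s f) (hg' : MonotoneOn g t) (hst : MapsTo f s t) :
    ConvexOn 𝕜 s (g ∘ f) :=
  ⟨hf.1, fun _ hx _ hy _ _ ha hb hab =>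
    (hg' (hst (hf.1 hx hy ha hb hab)) (hg.1 (hst hx) (hst hy) ha hb hab)
      (hf.2 hx hy ha hb hab)).trans (hg.2 (hst hx) (hst hy) ha hb hab)⟩

theorem ConvexOn.iterate [PartialOrder E] {f : E → E} (hf : ConvexOn 𝕜 s f)
    (hmono : MonotoneOn f s) (hmaps : MapsTo f s s) : ∀ k, ConvexOn 𝕜 s f^[k]
  | 0 => ⟨hf.1, fun _ _ _ _ _ _ _ _ _ => le_rfl⟩
  | k + 1 => by
    rw [iterate_succ']
    exact hf.comp_of_mapsTo (hf.iterate hmono hmaps k) hmono (hmaps.iterate k)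

theorem convexOn_pi {ι : Type*} {f : E → ι → β} (hs : Convex 𝕜 s)
    (hf : ∀ i, ConvexOn 𝕜 s fun x => f x i) : ConvexOn 𝕜 s f :=
  ⟨hs, fun _ hx _ hy _ _ ha hb hab i => (hf i).2 hx hy ha hb hab⟩

end Convexity

theorem MonotoneOn.iterate {α : Type*} [Preorder α] {s : Set α} {f : α → α}
    (hf : MonotoneOn f s) (hmaps : MapsTo f s s) : ∀ k, MonotoneOn f^[k] s
  | 0 => fun _ _ _ _ h => h
  | k + 1 => by
    rw [iterate_succ']
    exact hf.comp (hf.iterate hmaps k) (hmaps.iterate k)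

section Box

variable {ι : Type*} {s : Set (ι → ℝ)} {g : (ι → ℝ) → ι → ℝ} {w c d : ι → ℝ} {t : ℝ}

theorem ConvexOn.map_add_smul_le (hg : ConvexOn ℝ s g) (hw : w ∈ s) (hgw : g w = w)
    (hd : w + d ∈ s) (hc : g (w + d) ≤ c) (ht0 : 0 ≤ t) (ht1 : t ≤ 1) :
    g (w + t • d) ≤ w + t • (c - w) := by
  have h := hg.2 hw hd (sub_nonneg.2 ht1) ht0 (sub_add_cancel 1 t)
  rw [show (1 - t) • w + t • (w + d) = w + t • d by module, hgw] at h
  intro i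
  have hi := h i
  have hci := hc i
  simp only [Pi.add_apply, Pi.smul_apply, Pi.sub_apply, smul_eq_mul] at hi hci ⊢
  nlinarith

theorem ConvexOn.abs_map_add_smul_sub_le (hg : ConvexOn ℝ s g) (hw : w ∈ s) (hgw : g w = w)
    (hd : w + d ∈ s) (hd' : w - d ∈ s) (hc : g (w + d) ≤ c) (hc' : g (w - d) ≤ c)
    (ht0 : 0 ≤ t) (ht1 : t ≤ 1) (i : ι) :
    |g (w + t • d) i - w i| ≤ t * (c i - w i) := by
  rw [sub_eq_add_neg] at hd' hc'
  have hup := hg.map_add_smul_le hw hgw hd hc ht0 ht1 i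
  have hup' := hg.map_add_smul_le hw hgw hd' hc' ht0 ht1 i
  have hmem : w + t • d ∈ s := by
    simpa using hg.1.add_smul_sub_mem hw hd ⟨ht0, ht1⟩
  have hmem' : w + t • -d ∈ s := by
    simpa using hg.1.add_smul_sub_mem hw hd' ⟨ht0, ht1⟩
  have hmid := hg.2 hmem hmem' (by norm_num : (0 : ℝ) ≤ 1 / 2) (by norm_num : (0 : ℝ) ≤ 1 / 2)
    (by norm_num)
  rw [show (1 / 2 : ℝ) • (w + t • d) + (1 / 2 : ℝ) • (w + t • -d) = w by module, hgw] at hmid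
  have hlow := hmid i
  simp only [Pi.add_apply, Pi.smul_apply, Pi.sub_apply, smul_eq_mul] at hup hup' hlow ⊢
  rw [abs_le]
  constructor <;> linarith

end Box

section Dynamics

variable {n : ℕ} {D : Set (Fin n → ℝ)} {f : (Fin n → ℝ) → (Fin n → ℝ)} {v w c : Fin n → ℝ}

theorem lyapStable_of_eventually_iterate_le (hf : ConvexOn ℝ D f) (hmono : MonotoneOn f D)
    (hmaps : MapsTo f D D) (hD : D ∈ 𝓝 w) (hfw : f w = w)
    (hc : ∀ᶠ y in 𝓝 w, ∀ k, f^[k] y ≤ c) : LyapStable f D w := by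
  intro U hU
  obtain ⟨ε, hε, hεU⟩ := Metric.mem_nhds_iff.1 hU
  obtain ⟨s₀, hs₀, hs₀ε⟩ := exists_pos_mul_lt hε ‖c - w‖
  set s := min s₀ 1
  have hs : 0 < s := lt_min hs₀ one_pos
  have hsε : s * ‖c - w‖ < ε :=
    lt_of_le_of_lt (by rw [mul_comm]; gcongr; exact min_le_left _ _) hs₀ε
  set P : (Fin n → ℝ) → Prop := fun u => u ∈ D ∧ ∀ k, f^[k] u ≤ c
  have hP : ∀ᶠ u in 𝓝 w, P u := Filter.Eventually.and hD hc
  have hscale : ∀ σ : ℝ, Tendsto (fun y => w + σ • (y - w)) (𝓝 w) (𝓝 w) := fun σ => by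
    have hcont : Continuous fun y => w + σ • (y - w) := by fun_prop
    simpa using hcont.tendsto w
  have hV : ∀ᶠ y in 𝓝 w, y ∈ D ∧ P (w + s⁻¹ • (y - w)) ∧ P (w + (-s⁻¹) • (y - w)) :=
    Filter.Eventually.and hD (((hscale _).eventually hP).and ((hscale _).eventually hP))
  refine ⟨_, hV, fun y hy => hy.1, ?_⟩
  rintro y ⟨-, ⟨hd, hcd⟩, hd', hcd'⟩ k -
  rw [neg_smul, ← sub_eq_add_neg] at hd' hcd'
  have hy : w + s • (s⁻¹ • (y - w)) = y := by rw [smul_inv_smul₀ hs.ne']; abel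
  apply hεU
  rw [Metric.mem_ball, dist_pi_lt_iff hε]
  intro i
  have hbox := (hf.iterate hmono hmaps k).abs_map_add_smul_sub_le (mem_of_mem_nhds hD)
    (IsFixedPt.iterate hfw k) hd hd' (hcd k) (hcd' k) hs.le (min_le_right _ _) i
  rw [hy] at hbox
  calc dist (f^[k] y i) (w i) ≤ s * (c i - w i) := by rw [Real.dist_eq]; exact hbox
    _ ≤ s * ‖c - w‖ := by gcongr; exact (Real.le_norm_self _).trans (norm_le_pi_norm (c - w) i)
    _ < ε := hsε

theorem LyapStable.eventually_iterate_le (h : LyapStable f D v) :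
    ∀ᶠ y in 𝓝 v, ∀ k, f^[k] y ≤ v + 1 := by
  have hU : Iic (v + 1) ∈ 𝓝 v := pi_Iic_mem_nhds fun i => by simp
  obtain ⟨V, hV, -, hVU⟩ := h _ hU
  filter_upwards [hV, hU] with y hyV hyU k
  rcases k with _ | k
  · exact hyU
  · exact hVU y hyV (k + 1) k.succ_pos

theorem eventually_iterate_le_of_forall_lt (hmono : MonotoneOn f D) (hmaps : MapsTo f D D)
    (hD : D ∈ 𝓝 w) (hv : v ∈ D) (hfv : f v = v) (hwv : ∀ i, w i < v i) :
    ∀ᶠ y in 𝓝 w, ∀ k, f^[k] y ≤ v := by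
  filter_upwards [hD, pi_Iic_mem_nhds hwv] with y hy hyv k
  exact (hmono.iterate hmaps k hy hv hyv).trans_eq (IsFixedPt.iterate hfv k)

theorem eventually_iterate_le_of_le (hmono : MonotoneOn f D) (hmaps : MapsTo f D D)
    (hDw : D ∈ 𝓝 w) (hDv : D ∈ 𝓝 v) (hwv : w ≤ v) (hc : ∀ᶠ y in 𝓝 v, ∀ k, f^[k] y ≤ c) :
    ∀ᶠ y in 𝓝 w, ∀ k, f^[k] y ≤ c := by
  have hshift : Tendsto (fun y => y + (v - w)) (𝓝 w) (𝓝 v) := by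
    simpa using (continuous_add_const (v - w)).tendsto w
  filter_upwards [hDw, hshift.eventually (Filter.Eventually.and hDv hc)] with y hy ⟨hyD, hyc⟩ k
  exact (hmono.iterate hmaps k hy hyD (le_add_of_nonneg_right (sub_nonneg.2 hwv))).trans (hyc k)

end Dynamics

/-- if v and w are fixed points of a convex monotone map with w ≤ v,
and either w ≪ v or v is Lyapunov stable, then w is Lyapunov stable. -/
theorem stmt18 {n : ℕ} (D : Set (Fin n → ℝ)) (hDo : IsOpen D) (hDc : Convex ℝ D)
    (f : (Fin n → ℝ) → (Fin n → ℝ)) (hmaps : Set.MapsTo f D D)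
    (hconv : ∀ i, ConvexOn ℝ D (fun x => f x i))
    (hmono : ∀ x ∈ D, ∀ y ∈ D, x ≤ y → f x ≤ f y)
    (v w : Fin n → ℝ) (hv : v ∈ D) (hw : w ∈ D) (hfv : f v = v) (hfw : f w = w)
    (hwv : w ≤ v)
    (hcase : (∀ i, w i < v i) ∨ LyapStable f D v) :
    LyapStable f D w := by
  have hmono' : MonotoneOn f D := fun x hx y hy hxy => hmono x hx y hy hxy
  have hDw : D ∈ 𝓝 w := hDo.mem_nhds hw
  obtain ⟨c, hc⟩ : ∃ c, ∀ᶠ y in 𝓝 w, ∀ k, f^[k] y ≤ c := by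
    rcases hcase with hlt | hstable
    · exact ⟨v, eventually_iterate_le_of_forall_lt hmono' hmaps hDw hv hfv hlt⟩
    · exact ⟨v + 1, eventually_iterate_le_of_le hmono' hmaps hDw (hDo.mem_nhds hv) hwv
        hstable.eventually_iterate_le⟩
  exact lyapStable_of_eventually_iterate_le (convexOn_pi hDc hconv) hmono' hmaps hDw hfw hc
end
end
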